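/- Let A be a real m×s matrix with A·M ≠ 0, let M be a real s×N matrix, and let G be a real N×s matrix with M·G = I_s. Suppose σ > 0 and κ ≥ 1 satisfy ‖G u‖ ≤ (1/σ)·‖u‖ for every u ∈ ℝ^s and ‖M x‖ ≤ κσ·‖x‖ for every x ∈ ℝ^N. Let E be a real m×N matrix, set T̂ := A·M − E, and let T'' be a real m×N matrix with ‖T'' − T̂‖_F ≤ √2·‖E‖_F. Then ‖A − T''·G‖_F² / ‖A‖_F² ≤ (1 + √2)²·κ²·‖E‖_F² / ‖A·M‖_F². -/

import Mathlib

/-!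
Since `M G = 1`, the recovery error factors as `A - T'' G = (A M - T'') G`, and the residual
`A M - T'' = E - (T'' - T̂)` has Frobenius norm at most `(1 + √2) ‖E‖_F`. Right multiplication
acts row by row through `Bᵀ`, whose operator norm equals that of `B`, so
`‖X B‖_F ≤ ‖B‖₂ ‖X‖_F`. Hence `‖A - T'' G‖_F ≤ (1 + √2) ‖E‖_F / σ` and `‖A M‖_F ≤ κ σ ‖A‖_F`;
dividing the two bounds and squaring gives the estimate.
-/

open Matrix

/-- The Euclidean norm of a real vector. -/
noncomputable def euclNorm {n : Type*} [Fintype n] (v : n → ℝ) : ℝ :=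
  Real.sqrt (∑ i, v i ^ 2)

/-- The Frobenius norm of a real matrix. -/
noncomputable def frobNorm {m n : Type*} [Fintype m] [Fintype n] (M : Matrix m n ℝ) : ℝ :=
  Real.sqrt (∑ i, ∑ j, M i j ^ 2)

section

attribute [local instance] Matrix.frobeniusNormedAddCommGroup

variable {m n p : Type*} [Fintype m] [Fintype n] [Fintype p]

lemma euclNorm_nonneg (v : n → ℝ) : 0 ≤ euclNorm v := Real.sqrt_nonneg _

lemma frobNorm_nonneg (X : Matrix m n ℝ) : 0 ≤ frobNorm X := Real.sqrt_nonneg _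

lemma euclNorm_eq_norm (v : n → ℝ) : euclNorm v = ‖WithLp.toLp 2 v‖ := by
  simp [euclNorm, EuclideanSpace.norm_eq]

lemma euclNorm_sq (v : n → ℝ) : euclNorm v ^ 2 = v ⬝ᵥ v := by
  rw [euclNorm, Real.sq_sqrt (by positivity)]
  simp only [dotProduct, sq]

lemma dotProduct_le_euclNorm_mul (v w : n → ℝ) : v ⬝ᵥ w ≤ euclNorm v * euclNorm w := by
  simpa [euclNorm_eq_norm, EuclideanSpace.inner_toLp_toLp, dotProduct_comm] using
    real_inner_le_norm (WithLp.toLp 2 v) (WithLp.toLp 2 w)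

lemma frobNorm_sq (X : Matrix m n ℝ) : frobNorm X ^ 2 = ∑ i, euclNorm (X i) ^ 2 := by
  rw [frobNorm, Real.sq_sqrt (by positivity)]
  simp only [euclNorm, Real.sq_sqrt (Finset.sum_nonneg fun _ _ => sq_nonneg _)]

lemma frobNorm_eq_norm (X : Matrix m n ℝ) : frobNorm X = ‖X‖ := by
  rw [frobenius_norm_def, frobNorm, Real.sqrt_eq_rpow]
  simp [Real.norm_eq_abs, sq_abs]

lemma frobNorm_pos {X : Matrix m n ℝ} (hX : X ≠ 0) : 0 < frobNorm X := by
  rw [frobNorm_eq_norm]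
  exact norm_pos_iff.mpr hX

lemma euclNorm_vecMul_le {B : Matrix m n ℝ} {c : ℝ} (hc : 0 ≤ c)
    (hB : ∀ u, euclNorm (B *ᵥ u) ≤ c * euclNorm u) (x : m → ℝ) :
    euclNorm (x ᵥ* B) ≤ c * euclNorm x := by
  set y := x ᵥ* B
  have hy : euclNorm y ^ 2 ≤ c * euclNorm x * euclNorm y :=
    calc euclNorm y ^ 2 = x ⬝ᵥ B *ᵥ y := by rw [euclNorm_sq, dotProduct_mulVec]
      _ ≤ euclNorm x * euclNorm (B *ᵥ y) := dotProduct_le_euclNorm_mul _ _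
      _ ≤ euclNorm x * (c * euclNorm y) := by gcongr; exacts [euclNorm_nonneg x, hB y]
      _ = c * euclNorm x * euclNorm y := by ring
  nlinarith [euclNorm_nonneg y, mul_nonneg hc (euclNorm_nonneg x)]

lemma frobNorm_mul_le {B : Matrix n p ℝ} {c : ℝ} (hc : 0 ≤ c)
    (hB : ∀ u, euclNorm (B *ᵥ u) ≤ c * euclNorm u) (X : Matrix m n ℝ) :
    frobNorm (X * B) ≤ c * frobNorm X := by
  refine le_of_sq_le_sq ?_ (mul_nonneg hc (frobNorm_nonneg X))
  calc frobNorm (X * B) ^ 2 = ∑ i, euclNorm (X i ᵥ* B) ^ 2 := frobNorm_sq _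
    _ ≤ ∑ i, (c * euclNorm (X i)) ^ 2 := by
      gcongr with i
      exacts [euclNorm_nonneg _, euclNorm_vecMul_le hc hB (X i)]
    _ = (c * frobNorm X) ^ 2 := by simp only [mul_pow, frobNorm_sq, Finset.mul_sum]

lemma frobNorm_sub_mul_rightInverse_le [DecidableEq n] {M : Matrix n p ℝ} {G : Matrix p n ℝ}
    (hMG : M * G = 1) {c : ℝ} (hc : 0 ≤ c) (hG : ∀ u, euclNorm (G *ᵥ u) ≤ c * euclNorm u)
    (A : Matrix m n ℝ) (T : Matrix m p ℝ) :
    frobNorm (A - T * G) ≤ c * frobNorm (A * M - T) := by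
  have hfactor : A - T * G = (A * M - T) * G := by
    rw [Matrix.sub_mul, Matrix.mul_assoc, hMG, Matrix.mul_one]
  rw [hfactor]
  exact frobNorm_mul_le hc hG _

lemma frobNorm_sub_le_of_perturbation (X E T : Matrix m n ℝ) {δ : ℝ}
    (hT : frobNorm (T - (X - E)) ≤ δ * frobNorm E) :
    frobNorm (X - T) ≤ (1 + δ) * frobNorm E := by
  rw [frobNorm_eq_norm, frobNorm_eq_norm] at hT ⊢
  calc ‖X - T‖ = ‖E - (T - (X - E))‖ := by congr 1; abel
    _ ≤ ‖E‖ + ‖T - (X - E)‖ := norm_sub_le _ _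
    _ ≤ (1 + δ) * ‖E‖ := by linarith

end

/-- relative-error form of the paper's Proposition A.6: with `G` a right
inverse of the well-conditioned matrix `M` (`‖G u‖ ≤ ‖u‖/σ`, `‖M x‖ ≤ κσ ‖x‖`),
`T̂ = A M − E`, `A M ≠ 0`, and `‖T'' − T̂‖_F ≤ √2 ‖E‖_F`, the relative squared recovery
error satisfies `‖A − T'' G‖_F²/‖A‖_F² ≤ (1 + √2)² κ² ‖E‖_F²/‖A M‖_F²`. -/
theorem recovery_estimate_relative (m s N : ℕ)
    (A : Matrix (Fin m) (Fin s) ℝ) (M : Matrix (Fin s) (Fin N) ℝ)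
    (hAM : A * M ≠ 0)
    (G : Matrix (Fin N) (Fin s) ℝ) (hMG : M * G = 1)
    (σ κ : ℝ) (hσ : 0 < σ) (hκ : 1 ≤ κ)
    (hG : ∀ u : Fin s → ℝ, euclNorm (G.mulVec u) ≤ (1 / σ) * euclNorm u)
    (hM : ∀ x : Fin N → ℝ, euclNorm (M.mulVec x) ≤ κ * σ * euclNorm x)
    (E : Matrix (Fin m) (Fin N) ℝ)
    (T'' : Matrix (Fin m) (Fin N) ℝ)
    (hT : frobNorm (T'' - (A * M - E)) ≤ Real.sqrt 2 * frobNorm E) :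
    frobNorm (A - T'' * G) ^ 2 / frobNorm A ^ 2 ≤
      (1 + Real.sqrt 2) ^ 2 * κ ^ 2 * frobNorm E ^ 2 / frobNorm (A * M) ^ 2 := by
  have hrecovery : frobNorm (A - T'' * G) ≤ 1 / σ * ((1 + Real.sqrt 2) * frobNorm E) :=
    (frobNorm_sub_mul_rightInverse_le hMG (by positivity) hG A T'').trans
      (by gcongr; exact frobNorm_sub_le_of_perturbation _ _ _ hT)
  have hsignal : frobNorm (A * M) ≤ κ * σ * frobNorm A :=
    frobNorm_mul_le (mul_nonneg (by linarith) hσ.le) hM A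
  have hAM_pos : 0 < frobNorm (A * M) := frobNorm_pos hAM
  have hA_pos : 0 < frobNorm A := frobNorm_pos fun hA => hAM (by rw [hA, Matrix.zero_mul])
  have hratio : frobNorm (A - T'' * G) / frobNorm A ≤
      (1 + Real.sqrt 2) * κ * frobNorm E / frobNorm (A * M) := by
    rw [div_le_div_iff₀ hA_pos hAM_pos]
    calc frobNorm (A - T'' * G) * frobNorm (A * M)
        ≤ 1 / σ * ((1 + Real.sqrt 2) * frobNorm E) * (κ * σ * frobNorm A) := by
          gcongr
          exact (frobNorm_nonneg _).trans hrecovery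
      _ = (1 + Real.sqrt 2) * κ * frobNorm E * frobNorm A := by field_simp
  calc frobNorm (A - T'' * G) ^ 2 / frobNorm A ^ 2
      = (frobNorm (A - T'' * G) / frobNorm A) ^ 2 := (div_pow ..).symm
    _ ≤ ((1 + Real.sqrt 2) * κ * frobNorm E / frobNorm (A * M)) ^ 2 := by
      gcongr
      exact div_nonneg (frobNorm_nonneg _) hA_pos.le
    _ = (1 + Real.sqrt 2) ^ 2 * κ ^ 2 * frobNorm E ^ 2 / frobNorm (A * M) ^ 2 := by ring
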